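/- arXiv:1109.6733 — 5 statements merged into one kernel-verified Lean document; each statement's English description precedes it below -/
import Mathlib

section
/- If A is a commutative finite algebra over a field k that is wild (i.e., the radical of its trace form strictly contains the nilradical), then dim_k(A) ≥ dim_k(A^⊥) ≥ char(k) > 0. -/
open LinearMap Module

/-- The radical of the trace form, as a submodule. -/
noncomputable def traceRadical (k A : Type*) [Field k] [CommRing A] [Algebra k A] :
    Submodule k A where
  carrier := {x : A | ∀ y : A, Algebra.trace k A (x * y) = 0}
  add_mem' := fun {a b} ha hb y => by simp [add_mul, ha y, hb y]
  zero_mem' := fun y => by simp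
  smul_mem' := fun c x hx y => by simp [smul_mul_assoc, hx y]

theorem traceRadical_mul_mem {k A : Type*} [Field k] [CommRing A] [Algebra k A]
    {x : A} (hx : x ∈ traceRadical k A) (a : A) : a * x ∈ traceRadical k A := by
  intro y
  have := hx (a * y)
  rw [show a * x * y = x * (a * y) by ring]
  exact this

theorem nilradical_subset_traceRadical {k A : Type*} [Field k] [CommRing A] [Algebra k A]
    [FiniteDimensional k A] {x : A} (hx : x ∈ nilradical A) : x ∈ traceRadical k A := by
  intro y
  have hxy : IsNilpotent (x * y) := mem_nilradical.mp (Ideal.mul_mem_right y _ hx)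
  have hl : IsNilpotent (Algebra.lmul k A (x * y)) := by
    obtain ⟨n, hn⟩ := hxy
    exact ⟨n, by rw [← map_pow, hn, map_zero]⟩
  have := LinearMap.isNilpotent_trace_of_isNilpotent hl
  rw [Algebra.trace_apply]
  exact this.eq_zero

/-- If a commutative finite algebra `A` over a field `k` is wild (the radical
`A^⊥` of the trace form differs from the nilradical, which it always contains),
then `dim_k A ≥ dim_k A^⊥ ≥ char k > 0`. -/
theorem wild_dim_ge_char (k A : Type*) [Field k] [CommRing A] [Algebra k A]
    [FiniteDimensional k A]
    (hwild : {x : A | ∀ y : A, Algebra.trace k A (x * y) = 0} ≠ (nilradical A : Set A)) :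
    Module.finrank k A ≥ Set.finrank k {x : A | ∀ y : A, Algebra.trace k A (x * y) = 0} ∧
    Set.finrank k {x : A | ∀ y : A, Algebra.trace k A (x * y) = 0} ≥ ringChar k ∧
    0 < ringChar k := by
  have hset : {x : A | ∀ y : A, Algebra.trace k A (x * y) = 0} = ↑(traceRadical k A) := rfl
  -- Set.finrank of the set is the finrank of the submodule
  have hfr : Set.finrank k {x : A | ∀ y : A, Algebra.trace k A (x * y) = 0}
      = finrank k (traceRadical k A) := by
    rw [hset, Set.finrank, Submodule.span_eq]
  -- find a non-nilpotent element of the trace radical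
  have hex : ∃ r : A, r ∈ traceRadical k A ∧ ¬ IsNilpotent r := by
    by_contra h
    push_neg at h
    apply hwild
    rw [hset]
    ext z
    exact ⟨fun hz => mem_nilradical.mpr (h z hz), fun hz => nilradical_subset_traceRadical hz⟩
  obtain ⟨r, hrW, hrn⟩ := hex
  -- A is an artinian ring
  haveI : IsArtinianRing A := IsArtinianRing.of_finite k A
  obtain ⟨n, y, hy⟩ := IsArtinian.exists_pow_succ_smul_dvd (r : A) (1 : A)
  rw [smul_eq_mul, smul_eq_mul, mul_one, pow_succ] at hy
  -- hy : r ^ n * r * y = r ^ n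
  have key : ∀ m : ℕ, r ^ (n + m) * y ^ m = r ^ n := by
    intro m
    induction m with
    | zero => simp
    | succ m ih =>
      calc r ^ (n + (m + 1)) * y ^ (m + 1)
          = (r ^ n * r * y) * (r ^ m * y ^ m) := by ring
        _ = r ^ n * (r ^ m * y ^ m) := by rw [hy]
        _ = r ^ (n + m) * y ^ m := by ring
        _ = r ^ n := ih
  set e : A := r ^ n * y ^ n with he
  have he2 : e * e = e := by
    calc e * e = (r ^ (n + n) * y ^ n) * y ^ n := by rw [he]; ring
      _ = r ^ n * y ^ n := by rw [key n]
      _ = e := rfl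
  have hern : e * r ^ n = r ^ n := by
    calc e * r ^ n = r ^ (n + n) * y ^ n := by rw [he]; ring
      _ = r ^ n := key n
  have hene : e ≠ 0 := by
    intro h0
    exact hrn ⟨n, by rw [← hern, h0, zero_mul]⟩
  have heW : e ∈ traceRadical k A := by
    have : e = (r ^ n * y ^ n * y) * r := by
      have h1 : r ^ (n + 1) * y ^ 1 = r ^ n := key 1
      calc e = r ^ n * y ^ n := he
        _ = (r ^ (n + 1) * y ^ 1) * y ^ n := by rw [h1]
        _ = (r ^ n * y ^ n * y) * r := by ring
    rw [this]
    exact traceRadical_mul_mem hrW _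
  -- the multiplication-by-e map is a projection
  set f : A →ₗ[k] A := Algebra.lmul k A e with hf
  have hproj : LinearMap.IsProj (LinearMap.range f) f := by
    constructor
    · intro x; exact ⟨x, rfl⟩
    · rintro x ⟨z, rfl⟩
      show e * (e * z) = e * z
      rw [← mul_assoc, he2]
  -- trace of e equals the dimension of e*A
  have htre : Algebra.trace k A e = (finrank k (LinearMap.range f) : k) := by
    rw [Algebra.trace_apply]
    exact hproj.trace
  -- trace of e is zero since e is in the trace radical
  have htre0 : Algebra.trace k A e = 0 := by
    have := heW 1
    rwa [mul_one] at this
  have hcast : ((finrank k (LinearMap.range f) : ℕ) : k) = 0 := by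
    rw [← htre, htre0]
  -- e*A is contained in the trace radical
  have hrange : LinearMap.range f ≤ traceRadical k A := by
    rintro x ⟨z, rfl⟩
    show e * z ∈ traceRadical k A
    rw [mul_comm]
    exact traceRadical_mul_mem heW z
  have h1 : finrank k (LinearMap.range f) ≤ finrank k (traceRadical k A) :=
    Submodule.finrank_mono hrange
  haveI : Nontrivial (LinearMap.range f) :=
    ⟨⟨⟨e, ⟨1, by show e * 1 = e; rw [mul_one]⟩⟩, 0,
      fun h => hene (congrArg Subtype.val h)⟩⟩
  have hpos : 0 < finrank k (LinearMap.range f) := Module.finrank_pos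
  haveI : CharP k (ringChar k) := ringChar.charP k
  have hdvd : ringChar k ∣ finrank k (LinearMap.range f) :=
    (CharP.cast_eq_zero_iff k (ringChar k) _).mp hcast
  have hp0 : 0 < ringChar k := by
    rcases Nat.eq_zero_or_pos (ringChar k) with h | h
    · rw [h, zero_dvd_iff] at hdvd
      omega
    · exact h
  refine ⟨?_, ?_, hp0⟩
  · rw [hfr]
    exact Submodule.finrank_le (traceRadical k A)
  · rw [hfr]
    exact le_trans (Nat.le_of_dvd hpos hdvd) h1
end

section
/- Let T be a domain and A a T-algebra that is torsion-free as a T-module and integral over T. Then A ⊗_T Frac(T) is canonically isomorphic to the total quotient ring Q(A) of A (the localization of A at its set of non-zero-divisors). -/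
/-!
`A ⊗[T] Frac(T)` is the localization of `A` at the image of `T ∖ {0}`, which consists of
non-zero-divisors because `A` is torsion-free. A non-zero-divisor of `A` stays a
non-zero-divisor in this localization and is integral over the field `Frac(T)`, hence a unit.
So localizing further at all non-zero-divisors of `A` changes nothing.
-/

open scoped TensorProduct

open nonZeroDivisors

theorem Algebra.algebraMapSubmonoid_nonZeroDivisors_le {R A : Type*} [CommRing R] [CommRing A]
    [Algebra R A] [Module.IsTorsionFree R A] :
    Algebra.algebraMapSubmonoid A R⁰ ≤ A⁰ := by
  rintro _ ⟨r, hr, rfl⟩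
  have : IsLeftRegular (algebraMap R A r) :=
    (isSMulRegular_algebraMap_iff A).mpr (isRegular_iff_mem_nonZeroDivisors.mpr hr).isSMulRegular
  exact isRegular_iff_mem_nonZeroDivisors.mp (isLeftRegular_iff_isRegular.mp this)

theorem IsLocalization.of_le_nonZeroDivisors_of_isIntegral {R A B : Type*} [CommRing R]
    [IsArtinianRing R] [CommRing A] [CommRing B] [Algebra A B] [Algebra R B]
    (M : Submonoid A) [IsLocalization M B] (hM : M ≤ A⁰)
    (hint : ∀ a : A, IsIntegral R (algebraMap A B a)) : IsLocalization A⁰ B :=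
  of_le M A⁰ hM fun a ha ↦ IsArtinianRing.isUnit_of_isIntegral_of_nonZeroDivisor (hint a)
    (map_nonZeroDivisors_le M B ⟨a, ha, rfl⟩)

attribute [local instance] Algebra.TensorProduct.rightAlgebra

/-- Let `T` be a domain and `A` a `T`-algebra that is torsion-free as a `T`-module and
integral over `T`.  Then `A ⊗_T Frac(T)` is canonically the total quotient ring of `A`,
i.e. the localization of `A` at its submonoid of non-zero-divisors. -/
theorem tensor_fractionRing_isTotalQuotientRing (T A : Type*) [CommRing T] [IsDomain T]
    [CommRing A] [Algebra T A] [NoZeroSMulDivisors T A] [Algebra.IsIntegral T A] :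
    IsLocalization (nonZeroDivisors A) (A ⊗[T] FractionRing T) :=
  IsLocalization.of_le_nonZeroDivisors_of_isIntegral (R := FractionRing T)
    (Algebra.algebraMapSubmonoid A T⁰) Algebra.algebraMapSubmonoid_nonZeroDivisors_le
    fun a ↦
      ((Algebra.IsIntegral.isIntegral (R := T) a).map (IsScalarTower.toAlgHom T A _)).tower_top
end

section
/- Let R be a discrete valuation ring with maximal ideal p and A a local order over R with maximal ideal m. If A is tame at p (i.e., A/pA is a tame algebra over R/p), then the intersection pA^† ∩ A equals m. -/
/-!
For `a ∈ A`, `a ∈ p·A^†` holds iff `Tr_{A/R}(a c) ∈ p` for every `c ∈ A`: the trace of `QA` over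
`Q(R)` restricts to that of `A` over `R`, and for the converse one divides `a` by a uniformizer.
As the trace commutes with reduction modulo `p`, this says that `a mod pA` lies in the radical of
the trace form of `A/pA`, which by tameness is the nilradical. Since `A/pA` is finite over the
residue field, a power of `m` lies in `pA`, so this nilradical is `m/pA`.
-/

/-- The algebra structure of `A ⧸ pA` over `R ⧸ p` induced by `algebraMap R A`. -/
noncomputable instance quotMapAlgebra {R A : Type*} [CommRing R] [CommRing A] [Algebra R A]
    (p : Ideal R) : Algebra (R ⧸ p) (A ⧸ Ideal.map (algebraMap R A) p) :=
  (Ideal.quotientMap _ (algebraMap R A) Ideal.le_comap_map).toAlgebra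

/-- A finite commutative algebra `A` over a field `k` is tame if the radical of the
trace form equals the nilradical.  (Stated for a commutative base ring; in applications the base is the residue field `R ⧸ p`, which is a field.) -/
def IsTameOver (k A : Type*) [CommRing k] [CommRing A] [Algebra k A] : Prop :=
  {x : A | ∀ y : A, Algebra.trace k A (x * y) = 0} = (nilradical A : Set A)

open IsLocalRing

theorem isNilpotent_mk_iff_mem_maximalIdeal {A : Type*} [CommRing A] [IsLocalRing A]
    {I : Ideal A} (hI : I ≤ maximalIdeal A) [IsArtinianRing (A ⧸ I)] (a : A) :
    IsNilpotent (Ideal.Quotient.mk I a) ↔ a ∈ maximalIdeal A := by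
  constructor
  · rintro ⟨n, hn⟩
    rw [← map_pow, Ideal.Quotient.eq_zero_iff_mem] at hn
    exact (maximalIdeal.isMaximal A).isPrime.mem_of_pow_mem n (hI hn)
  · intro ha
    obtain ⟨n, hn⟩ := exists_maximalIdeal_pow_le_of_isArtinianRing_quotient I
    exact ⟨n, by rw [← map_pow, Ideal.Quotient.eq_zero_iff_mem]; exact hn (Ideal.pow_mem_pow ha n)⟩

section TameQuotient

variable {R A : Type*} [CommRing R] [IsLocalRing R] [CommRing A] [Algebra R A]

theorem map_maximalIdeal_le_maximalIdeal [IsLocalRing A] [Algebra.IsIntegral R A] :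
    (maximalIdeal R).map (algebraMap R A) ≤ maximalIdeal A :=
  Ideal.map_le_iff_le_comap.mpr
    (eq_maximalIdeal (Ideal.isMaximal_comap_of_isIntegral_of_isMaximal _)).ge

instance isArtinianRing_quotient_map_maximalIdeal [Module.Finite R A] :
    IsArtinianRing (A ⧸ (maximalIdeal R).map (algebraMap R A)) := by
  let := Ideal.Quotient.field (maximalIdeal R)
  have : IsScalarTower R (R ⧸ maximalIdeal R) (A ⧸ (maximalIdeal R).map (algebraMap R A)) :=
    .of_algebraMap_eq fun _ ↦ rfl
  have : Module.Finite (R ⧸ maximalIdeal R) (A ⧸ (maximalIdeal R).map (algebraMap R A)) :=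
    .of_restrictScalars_finite R _ _
  exact isArtinian_of_tower (R ⧸ maximalIdeal R) inferInstance

theorem trace_mul_mem_maximalIdeal_iff_isNilpotent [Module.Free R A] [Module.Finite R A]
    (htame : IsTameOver (R ⧸ maximalIdeal R) (A ⧸ (maximalIdeal R).map (algebraMap R A)))
    (a : A) : (∀ c : A, Algebra.trace R A (a * c) ∈ maximalIdeal R) ↔
      IsNilpotent (Ideal.Quotient.mk ((maximalIdeal R).map (algebraMap R A)) a) := by
  -- `Algebra.trace_quotient_mk` is stated for Mathlib's own algebra structure on `A ⧸ pA`.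
  have hAlg : quotMapAlgebra (A := A) (maximalIdeal R) =
      Ideal.Quotient.algebraQuotientMapQuotient := Algebra.algebra_ext _ _ fun _ ↦ rfl
  have htrace (c : A) : Algebra.trace R A (a * c) ∈ maximalIdeal R ↔
      Algebra.trace (R ⧸ maximalIdeal R) (A ⧸ (maximalIdeal R).map (algebraMap R A))
        (Ideal.Quotient.mk _ a * Ideal.Quotient.mk _ c) = 0 := by
    rw [← map_mul, hAlg, Algebra.trace_quotient_mk, Ideal.Quotient.eq_zero_iff_mem]
  rw [← mem_nilradical, ← SetLike.mem_coe, ← htame, Set.mem_ofPred_eq,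
    Ideal.Quotient.mk_surjective.forall]
  exact forall_congr' htrace

theorem mem_maximalIdeal_iff_forall_trace_mul_mem [IsLocalRing A] [Module.Free R A]
    [Module.Finite R A]
    (htame : IsTameOver (R ⧸ maximalIdeal R) (A ⧸ (maximalIdeal R).map (algebraMap R A)))
    (a : A) : a ∈ maximalIdeal A ↔ ∀ c : A, Algebra.trace R A (a * c) ∈ maximalIdeal R := by
  rw [trace_mul_mem_maximalIdeal_iff_isNilpotent htame,
    isNilpotent_mk_iff_mem_maximalIdeal map_maximalIdeal_le_maximalIdeal]

end TameQuotient

section TraceDual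

variable {R A K QA : Type*} [CommRing R] [CommRing A] [Algebra R A]
  [Module.Free R A] [Module.Finite R A] [Field K] [Algebra R K] [IsFractionRing R K]
  [CommRing QA] [Algebra A QA] [Algebra R QA] [IsScalarTower R A QA]
  [Algebra K QA] [IsScalarTower R K QA]
  [IsLocalization (Algebra.algebraMapSubmonoid A (nonZeroDivisors R)) QA]

theorem trace_mul_mem_of_algebraMap_eq_smul {p : Ideal R} {r : R} (hr : r ∈ p) {x : QA}
    (hx : ∀ c : A, Algebra.trace K QA (x * algebraMap A QA c) ∈ Set.range (algebraMap R K))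
    {a : A} (ha : algebraMap A QA a = r • x) (c : A) : Algebra.trace R A (a * c) ∈ p := by
  obtain ⟨s, hs⟩ := hx c
  have : algebraMap R K (Algebra.trace R A (a * c)) = algebraMap R K (r * s) := by
    rw [← Algebra.trace_localization R (nonZeroDivisors R) (Rₘ := K) (Sₘ := QA), map_mul, ha,
      smul_mul_assoc, LinearMap.map_smul_of_tower, ← hs, Algebra.smul_def, map_mul]
  rw [IsFractionRing.injective R K this]
  exact p.mul_mem_right s hr

theorem exists_algebraMap_eq_smul_of_trace_mul_mem {π : R} (hπ : π ≠ 0) {a : A}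
    (ha : ∀ c : A, Algebra.trace R A (a * c) ∈ Ideal.span {π}) :
    ∃ x : QA, (∀ c : A, Algebra.trace K QA (x * algebraMap A QA c) ∈
      Set.range (algebraMap R K)) ∧ algebraMap A QA a = π • x := by
  have hπK : algebraMap R K π ≠ 0 := (map_ne_zero_iff _ (IsFractionRing.injective R K)).mpr hπ
  refine ⟨(algebraMap R K π)⁻¹ • algebraMap A QA a, fun c ↦ ?_, ?_⟩
  · obtain ⟨s, hs⟩ := Ideal.mem_span_singleton'.mp (ha c)
    refine ⟨s, ?_⟩
    rw [smul_mul_assoc, ← map_mul, map_smul,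
      Algebra.trace_localization R (nonZeroDivisors R) (Rₘ := K) (Sₘ := QA), ← hs,
      map_mul, smul_eq_mul, mul_comm, mul_assoc, mul_inv_cancel₀ hπK, mul_one]
  · rw [← smul_assoc, Algebra.smul_def π, mul_inv_cancel₀ hπK, one_smul]

end TraceDual

theorem tame_smul_traceDual_inter_eq_maximalIdeal_general
    (R : Type*) [CommRing R] [IsDomain R] [IsDiscreteValuationRing R]
    (A : Type*) [CommRing A] [IsLocalRing A] [Algebra R A]
    [Module.Finite R A] [NoZeroSMulDivisors R A]
    (QA : Type*) [CommRing QA] [Algebra A QA] [Algebra R QA] [IsScalarTower R A QA]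
    [Algebra (FractionRing R) QA] [IsScalarTower R (FractionRing R) QA]
    [IsLocalization (Algebra.algebraMapSubmonoid A (nonZeroDivisors R)) QA]
    (htame : IsTameOver (R ⧸ IsLocalRing.maximalIdeal R)
      (A ⧸ Ideal.map (algebraMap R A) (IsLocalRing.maximalIdeal R))) :
    {y : QA | (∃ r ∈ IsLocalRing.maximalIdeal R, ∃ x : QA,
        (∀ a : A, Algebra.trace (FractionRing R) QA (x * algebraMap A QA a) ∈
          Set.range (algebraMap R (FractionRing R))) ∧ y = r • x) ∧
      y ∈ Set.range (algebraMap A QA)} =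
    algebraMap A QA '' (IsLocalRing.maximalIdeal A) := by
  ext y
  constructor
  · rintro ⟨⟨r, hr, x, hx, rfl⟩, a, ha⟩
    exact ⟨a, (mem_maximalIdeal_iff_forall_trace_mul_mem htame a).mpr
      (trace_mul_mem_of_algebraMap_eq_smul hr hx ha), ha⟩
  · rintro ⟨a, ha, rfl⟩
    obtain ⟨π, hπ⟩ := IsDiscreteValuationRing.exists_irreducible R
    have hp : maximalIdeal R = Ideal.span {π} :=
      (IsDiscreteValuationRing.irreducible_iff_uniformizer π).mp hπ
    obtain ⟨x, hx, hax⟩ := exists_algebraMap_eq_smul_of_trace_mul_mem (K := FractionRing R)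
      (QA := QA) hπ.ne_zero (hp ▸ (mem_maximalIdeal_iff_forall_trace_mul_mem htame a).mp ha)
    exact ⟨⟨π, hp ▸ Ideal.mem_span_singleton_self π, x, hx, hax⟩, a, rfl⟩

/-- Let `R` be a DVR with maximal ideal `p` and `A` a local order over `R` with maximal
ideal `m`, with total quotient ring `QA` (finite étale over `Q(R)`).  If `A` is tame at
`p` (i.e. `A/pA` is tame over `R/p`), then `p·A^† ∩ A = m` inside `QA`. -/
theorem tame_smul_traceDual_inter_eq_maximalIdeal
    (R : Type*) [CommRing R] [IsDomain R] [IsDiscreteValuationRing R]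
    (A : Type*) [CommRing A] [Nontrivial A] [IsLocalRing A] [Algebra R A]
    [Module.Finite R A] [NoZeroSMulDivisors R A]
    (QA : Type*) [CommRing QA] [Algebra A QA] [Algebra R QA] [IsScalarTower R A QA]
    [Algebra (FractionRing R) QA] [IsScalarTower R (FractionRing R) QA]
    [IsLocalization (Algebra.algebraMapSubmonoid A (nonZeroDivisors R)) QA]
    [Module.Finite (FractionRing R) QA]
    (hEt : (Algebra.traceForm (FractionRing R) QA).Nondegenerate)
    (htame : IsTameOver (R ⧸ IsLocalRing.maximalIdeal R)
      (A ⧸ Ideal.map (algebraMap R A) (IsLocalRing.maximalIdeal R))) :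
    {y : QA | (∃ r ∈ IsLocalRing.maximalIdeal R, ∃ x : QA,
        (∀ a : A, Algebra.trace (FractionRing R) QA (x * algebraMap A QA a) ∈
          Set.range (algebraMap R (FractionRing R))) ∧ y = r • x) ∧
      y ∈ Set.range (algebraMap A QA)} =
    algebraMap A QA '' (IsLocalRing.maximalIdeal A) :=
  tame_smul_traceDual_inter_eq_maximalIdeal_general R A QA htame
end

section
/- Let R be a discrete valuation ring, A an order over R, and I = Ann_R(A^†/A). Then the pairing (x+A, y+A) ↦ Tr_{Q(A)/Q(R)}(xy) + R defines a well-defined non-degenerate symmetric R/I-bilinear form A^†/A × A^†/A → I^{-1}/R. -/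
section

variable (R : Type*) [CommRing R] [IsDomain R] [IsDiscreteValuationRing R]
  (A : Type*) [CommRing A] [Nontrivial A] [Algebra R A]
  [Module.Finite R A] [NoZeroSMulDivisors R A]
  (QA : Type*) [CommRing QA] [Algebra A QA] [Algebra R QA] [IsScalarTower R A QA]
  [Algebra (FractionRing R) QA] [IsScalarTower R (FractionRing R) QA]

/-- The trace dual `A^† = {x ∈ QA : Tr_{Q(A)/Q(R)}(x·A) ⊆ R}` as an `R`-submodule
of the total quotient ring `QA`. -/
noncomputable def traceDualSubmodule : Submodule R QA where
  carrier := {x : QA | ∀ a : A, Algebra.trace (FractionRing R) QA (x * algebraMap A QA a) ∈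
    Set.range (algebraMap R (FractionRing R))}
  zero_mem' := fun a => ⟨0, by simp⟩
  add_mem' := by
    rintro x y hx hy a
    obtain ⟨b, hb⟩ := hx a
    obtain ⟨c, hc⟩ := hy a
    exact ⟨b + c, by rw [map_add, hb, hc, add_mul, map_add]⟩
  smul_mem' := by
    rintro r x hx a
    obtain ⟨b, hb⟩ := hx a
    refine ⟨r * b, ?_⟩
    rw [map_mul, hb, smul_mul_assoc, LinearMap.map_smul_of_tower, Algebra.smul_def]

/-- The image of `A` in `QA`, as an `R`-submodule. -/
noncomputable def imageOfOrder : Submodule R QA :=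
  LinearMap.range ((IsScalarTower.toAlgHom R A QA).toLinearMap)

/-- The image of `R` in `Q(R)`, as an `R`-submodule. -/
noncomputable def imageOfBase : Submodule R (FractionRing R) :=
  LinearMap.range (Algebra.linearMap R (FractionRing R))

/-!
With `B` the trace form of `Q(A)/Q(R)`, `A^†` is the `B`-dual lattice of `A`. An `R`-basis `b` of
`A` (which is free, `R` being a PID) is a `Q(R)`-basis of `Q(A)`, so `A^†` is the `R`-span of the
`B`-dual basis `d` and `(A^†)^† = A`. Since `B(A^†, A) ⊆ R`, the form `x, y ↦ B x y mod R`
descends to `A^†/A`; its adjoint is injective because `(A^†)^† = A`, and surjective because a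
homomorphism `ψ` is represented by `x = ∑ wᵢ bᵢ` with `wᵢ` lifting `ψ(dᵢ)`: indeed
`B(x, dᵢ) = wᵢ`, and `x ∈ A^†` as `ψ` kills `A ⊆ A^†`.
-/

namespace Submodule

variable {𝒪 M P ι : Type*} [Semiring 𝒪] [AddCommMonoid M] [Module 𝒪 M] [AddCommMonoid P]
  [Module 𝒪 P]

theorem linearMap_ext_of_eq_span {N : Submodule 𝒪 M} {v : ι → M}
    (hN : N = span 𝒪 (Set.range v)) {f g : N →ₗ[𝒪] P}
    (h : ∀ i (hi : v i ∈ N), f ⟨v i, hi⟩ = g ⟨v i, hi⟩) : f = g := by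
  subst hN
  refine LinearMap.ext_on span_span_coe_preimage ?_
  rintro ⟨_, hy⟩ ⟨i, rfl⟩
  exact h i hy

end Submodule

namespace LinearMap

namespace BilinForm

open Module Submodule

variable {𝒪 K V : Type*} [CommRing 𝒪] [Field K] [AddCommGroup V] [Algebra 𝒪 K]
  [Module 𝒪 V] [Module K V] [IsScalarTower 𝒪 K V] {B : LinearMap.BilinForm K V}
  {L : Submodule 𝒪 V}

theorem apply_dualBasis_right_eq_repr {ι : Type*} [DecidableEq ι] [Finite ι]
    (hB : B.Nondegenerate) (hB' : B.IsSymm) (b : Basis ι K V) (x : V) (i : ι) :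
    B x (B.dualBasis hB b i) = b.repr x i := by
  rw [← dualBasis_repr_apply hB, dualBasis_dualBasis hB hB']

theorem smul_apply_mem_one_of_smul_mem (hB : B.IsSymm) {r : 𝒪} {x y : V} (hx : r • x ∈ L)
    (hy : y ∈ B.dualSubmodule L) : r • B x y ∈ (1 : Submodule 𝒪 K) := by
  rw [← LinearMap.smul_apply, ← map_smul_of_tower, hB.eq]
  exact hy _ hx

variable (B L)

abbrev dualQuotient : Type _ :=
  B.dualSubmodule L ⧸ L.comap (B.dualSubmodule L).subtype

noncomputable def dualQuotientPairing (hB : B.IsSymm) :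
    B.dualQuotient L →ₗ[𝒪] B.dualQuotient L →ₗ[𝒪] K ⧸ (1 : Submodule 𝒪 K) :=
  (((B.restrictScalars₁₂ 𝒪 𝒪).domRestrict₁₂ _ _).compr₂ (1 : Submodule 𝒪 K).mkQ).liftQ₂ _ _
    (fun x hx => LinearMap.ext fun y =>
      (Submodule.Quotient.mk_eq_zero _).mpr <| hB.eq x y ▸ y.2 x hx)
    (fun y hy => LinearMap.ext fun x => (Submodule.Quotient.mk_eq_zero _).mpr <| x.2 y hy)

variable {B L}

@[simp]
theorem dualQuotientPairing_mk_mk (hB : B.IsSymm) (x y : B.dualSubmodule L) :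
    B.dualQuotientPairing L hB (Submodule.Quotient.mk x) (Submodule.Quotient.mk y) =
      Submodule.Quotient.mk (B x y) :=
  rfl

theorem dualQuotientPairing_comm (hB : B.IsSymm) (u v : B.dualQuotient L) :
    B.dualQuotientPairing L hB u v = B.dualQuotientPairing L hB v u := by
  induction u using Submodule.Quotient.induction_on
  induction v using Submodule.Quotient.induction_on
  simp only [dualQuotientPairing_mk_mk, hB.eq]

theorem dualQuotientPairing_injective {ι : Type*} [Finite ι] (hB : B.IsSymm)
    (hB' : B.Nondegenerate) (b : Basis ι K V) (hL : L = span 𝒪 (Set.range b)) :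
    Function.Injective (B.dualQuotientPairing L hB) := by
  refine (injective_iff_map_eq_zero _).mpr fun u hu => ?_
  induction u using Submodule.Quotient.induction_on with | _ x
  refine (Submodule.Quotient.mk_eq_zero _).mpr ?_
  have hLL : B.dualSubmodule (B.dualSubmodule L) = L :=
    hL ▸ dualSubmodule_dualSubmodule_of_basis B hB' hB b
  exact hLL.le fun y hy => (Submodule.Quotient.mk_eq_zero _).mp <|
    LinearMap.congr_fun hu (Submodule.Quotient.mk ⟨y, hy⟩)

theorem dualQuotientPairing_surjective {ι : Type*} [Finite ι] (hB : B.IsSymm)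
    (hB' : B.Nondegenerate) (b : Basis ι K V) (hL : L = span 𝒪 (Set.range b))
    (hLL : L ≤ B.dualSubmodule L) :
    Function.Surjective (B.dualQuotientPairing L hB) := by
  classical
  cases nonempty_fintype ι
  intro ψ
  set d := B.dualBasis hB' b
  have hd : B.dualSubmodule L = span 𝒪 (Set.range d) :=
    hL ▸ dualSubmodule_span_of_basis B hB' b
  choose w hw using fun i => Submodule.Quotient.mk_surjective _
    (ψ (Submodule.Quotient.mk ⟨d i, hd ▸ subset_span ⟨i, rfl⟩⟩))
  set x := b.equivFun.symm w
  have hx : ∀ y : B.dualSubmodule L,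
      Submodule.Quotient.mk (B x y) = ψ (Submodule.Quotient.mk y) := by
    refine LinearMap.congr_fun (g := ψ ∘ₗ Submodule.mkQ _)
      (f := (1 : Submodule 𝒪 K).mkQ ∘ₗ B.restrictScalars₁₂ 𝒪 𝒪 x ∘ₗ (B.dualSubmodule L).subtype)
      (Submodule.linearMap_ext_of_eq_span hd fun i hi => ?_)
    change Submodule.Quotient.mk (B x (d i)) = _
    rw [apply_dualBasis_right_eq_repr hB' hB, ← b.equivFun_apply, b.equivFun.apply_symm_apply]
    exact hw i
  have hxL : x ∈ B.dualSubmodule L := fun a ha => by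
    have h0 : (Submodule.Quotient.mk ⟨a, hLL ha⟩ : B.dualQuotient L) = 0 :=
      (Submodule.Quotient.mk_eq_zero _).mpr ha
    have := hx ⟨a, hLL ha⟩
    rwa [h0, map_zero, Submodule.Quotient.mk_eq_zero] at this
  refine ⟨Submodule.Quotient.mk ⟨x, hxL⟩, LinearMap.ext fun v => ?_⟩
  induction v using Submodule.Quotient.induction_on with | _ y
  exact hx y

end BilinForm

end LinearMap

open Module Submodule LinearMap.BilinForm

section

variable (R A QA : Type*) [CommRing R] [CommRing A] [Algebra R A] [CommRing QA] [Algebra A QA]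
  [Algebra R QA] [IsScalarTower R A QA] [Algebra (FractionRing R) QA]
  [IsScalarTower R (FractionRing R) QA]

theorem imageOfBase_eq_one : imageOfBase R = 1 :=
  one_eq_range.symm

theorem traceDualSubmodule_eq_dualSubmodule [IsDomain R] :
    traceDualSubmodule R A QA =
      (Algebra.traceForm (FractionRing R) QA).dualSubmodule (imageOfOrder R A QA) := by
  ext x
  exact ⟨fun hx _ ⟨a, ha⟩ => ha ▸ mem_one.mpr (hx a),
    fun hx a => mem_one.mp (hx _ ⟨a, rfl⟩)⟩

variable [IsLocalization (Algebra.algebraMapSubmonoid A (nonZeroDivisors R)) QA]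

theorem imageOfOrder_eq_span {ι : Type*} (b : Basis ι R A) :
    imageOfOrder R A QA =
      span R (Set.range (b.localizationLocalization (FractionRing R) (nonZeroDivisors R) QA)) :=
  (b.localizationLocalization_span _ _ _).symm

theorem imageOfOrder_le_traceDualSubmodule [Module.Free R A] [Module.Finite R A] :
    imageOfOrder R A QA ≤ traceDualSubmodule R A QA := by
  rintro _ ⟨a, rfl⟩ a'
  exact ⟨Algebra.trace R A (a * a'), by
    rw [← Algebra.trace_localization R (nonZeroDivisors R) (Rₘ := FractionRing R) (Sₘ := QA),
      map_mul]
    rfl⟩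

end

theorem traceDual_pairing_nondegenerate
    [IsLocalization (Algebra.algebraMapSubmonoid A (nonZeroDivisors R)) QA]
    (hEt : (Algebra.traceForm (FractionRing R) QA).Nondegenerate) :
    ∃ b : (traceDualSubmodule R A QA ⧸
            ((imageOfOrder R A QA).comap (traceDualSubmodule R A QA).subtype)) →ₗ[R]
          (traceDualSubmodule R A QA ⧸
            ((imageOfOrder R A QA).comap (traceDualSubmodule R A QA).subtype)) →ₗ[R]
          ((FractionRing R) ⧸ imageOfBase R),
      (∀ (x y : QA) (hx : x ∈ traceDualSubmodule R A QA) (hy : y ∈ traceDualSubmodule R A QA),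
        b (Submodule.Quotient.mk ⟨x, hx⟩) (Submodule.Quotient.mk ⟨y, hy⟩) =
          Submodule.Quotient.mk (Algebra.trace (FractionRing R) QA (x * y))) ∧
      (∀ u v, b u v = b v u) ∧
      (∀ u v, ∃ w : FractionRing R,
        (∀ r : R, (∀ y ∈ traceDualSubmodule R A QA, r • y ∈ imageOfOrder R A QA) →
          r • w ∈ imageOfBase R) ∧
        b u v = Submodule.Quotient.mk w) ∧
      Function.Bijective ⇑b := by
  have hL := imageOfOrder_eq_span R A QA (Free.chooseBasis R A)
  have hLL := imageOfOrder_le_traceDualSubmodule R A QA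
  have hB := Algebra.traceForm_isSymm (FractionRing R) (S := QA)
  rw [traceDualSubmodule_eq_dualSubmodule] at hLL ⊢
  rw [imageOfBase_eq_one]
  refine ⟨dualQuotientPairing _ _ hB, fun _ _ _ _ => rfl, dualQuotientPairing_comm hB, ?_,
    dualQuotientPairing_injective hB hEt _ hL, dualQuotientPairing_surjective hB hEt _ hL hLL⟩
  rintro ⟨x⟩ ⟨y⟩
  exact ⟨_, fun r hr => smul_apply_mem_one_of_smul_mem hB (hr x x.2) y.2, rfl⟩

end
end

section
/- Let B be a commutative ring with a finite group G of ring automorphisms. If φ, ψ : B → k are ring homomorphisms to a domain k that coincide on the fixed ring B^G, then φ = ψ ∘ g for some g ∈ G. -/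
open Polynomial

/-- Key lemma: if two ring homs to a domain agree on the fixed subring, then each single
element is moved into agreement by some group element. -/
private theorem key_exists_smul {C : Type*} [CommRing C] {G : Type*} [Group G] [Fintype G]
    [MulSemiringAction G C] {D : Type*} [CommRing D] [IsDomain D] (Φ Ψ : C →+* D)
    (h : ∀ c : C, (∀ g : G, g • c = c) → Φ c = Ψ c) (x : C) :
    ∃ g : G, Φ x = Ψ (g • x) := by
  classical
  set N : C[X] := ∏ g : G, (X - Polynomial.C (g • x)) with hN
  have hsmul : ∀ τ : G, τ • N = N := by
    intro τ
    rw [hN, Finset.smul_prod']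
    have h1 : ∀ g : G, τ • (X - Polynomial.C (g • x)) = X - Polynomial.C ((τ * g) • x) := by
      intro g
      rw [smul_sub, Polynomial.smul_X, Polynomial.smul_C, mul_smul]
    simp_rw [h1]
    exact Fintype.prod_equiv (Equiv.mulLeft τ) _ _ (fun g => rfl)
  have heval : N.eval x = 0 := by
    rw [hN, Polynomial.eval_prod]
    refine Finset.prod_eq_zero (Finset.mem_univ (1 : G)) ?_
    simp
  have hmap : N.map Φ = N.map Ψ := by
    ext n
    rw [Polynomial.coeff_map, Polynomial.coeff_map]
    refine h _ (fun g => ?_)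
    rw [← Polynomial.coeff_smul, hsmul]
  have h0 : (N.map Ψ).eval (Φ x) = 0 := by
    rw [← hmap, Polynomial.eval_map, Polynomial.eval₂_hom, heval, map_zero]
  rw [hN, Polynomial.map_prod, Polynomial.eval_prod] at h0
  simp only [Polynomial.map_sub, Polynomial.map_X, Polynomial.map_C, Polynomial.eval_sub,
    Polynomial.eval_X, Polynomial.eval_C] at h0
  obtain ⟨g, -, hg⟩ := Finset.prod_eq_zero_iff.mp h0
  exact ⟨g, by rwa [sub_eq_zero] at hg⟩

/-- Let `B` be a commutative ring with a finite group `G` of ring automorphisms.  If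
`φ, ψ : B → k` are ring homomorphisms to a domain `k` that coincide on the fixed ring
`B^G`, then `φ = ψ ∘ g` for some `g ∈ G`. -/
theorem ringHom_eq_comp_of_eqOn_fixed
    (B : Type*) [CommRing B] (G : Type*) [Group G] [Finite G] [MulSemiringAction G B]
    (k : Type*) [CommRing k] [IsDomain k]
    (φ ψ : B →+* k)
    (h : ∀ b : B, (∀ g : G, g • b = b) → φ b = ψ b) :
    ∃ g : G, ∀ b : B, φ b = ψ (g • b) := by
  classical
  have : Fintype G := Fintype.ofFinite G
  by_contra hc
  push_neg at hc
  choose b hb using hc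
  set e : G ≃ Fin (Fintype.card G) := Fintype.equivFin G with he
  -- encode all witnesses into a single polynomial
  set P : B[X] := ∑ g : G, Polynomial.monomial (e g : ℕ) (b g) with hP
  have hcoeff : ∀ (c : G → B) (g₀ : G),
      (∑ g : G, Polynomial.monomial (e g : ℕ) (c g)).coeff (e g₀ : ℕ) = c g₀ := by
    intro c g₀
    rw [Polynomial.finset_sum_coeff, Finset.sum_eq_single g₀]
    · rw [Polynomial.coeff_monomial, if_pos rfl]
    · intro g _ hne
      rw [Polynomial.coeff_monomial, if_neg]
      exact fun hEq => hne (e.injective (Fin.val_injective hEq))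
    · intro hg; exact absurd (Finset.mem_univ g₀) hg
  have hfix : ∀ p : B[X], (∀ g : G, g • p = p) →
      (Polynomial.mapRingHom φ) p = (Polynomial.mapRingHom ψ) p := by
    intro p hp
    ext n
    rw [Polynomial.coe_mapRingHom, Polynomial.coe_mapRingHom,
      Polynomial.coeff_map, Polynomial.coeff_map]
    refine h _ (fun g => ?_)
    rw [← Polynomial.coeff_smul, hp]
  obtain ⟨σ, hσ⟩ := key_exists_smul (Polynomial.mapRingHom φ) (Polynomial.mapRingHom ψ) hfix P
  have hσP : σ • P = ∑ g : G, Polynomial.monomial (e g : ℕ) (σ • b g) := by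
    rw [hP, Finset.smul_sum]
    exact Finset.sum_congr rfl (fun g _ => Polynomial.smul_monomial σ _ _)
  have := congrArg (fun q : k[X] => q.coeff (e σ : ℕ)) hσ
  simp only [Polynomial.coe_mapRingHom, Polynomial.coeff_map, hσP] at this
  rw [hP, hcoeff] at this
  -- right side
  have hr : (∑ g : G, Polynomial.monomial (e g : ℕ) (σ • b g)).coeff (e σ : ℕ) = σ • b σ :=
    hcoeff (fun g => σ • b g) σ
  rw [hr] at this
  exact hb σ this
end
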